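/- For subgroups A of G and B of H with gcd(|G|,|H|) = 1, the permutizer satisfies P_{G×H}(A × B) = P_G(A) × P_H(B). -/
import Mathlib


open scoped Pointwise

def permutizer {G : Type*} [Group G] (X : Subgroup G) : Subgroup G :=
  Subgroup.closure {g : G |
    (Subgroup.zpowers g : Set G) * (X : Set G) = (X : Set G) * (Subgroup.zpowers g : Set G)}

noncomputable def pd (G : Type*) [Group G] : ℚ :=
  (∑ᶠ X : Subgroup G, (Nat.card ↥(permutizer X) : ℚ)) /
    ((Nat.card G : ℚ) * (Nat.card (Subgroup G) : ℚ))

noncomputable def PP (G : Type*) [Group G] : Subgroup G :=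
  ⨅ H : Subgroup G, permutizer H

private lemma set_prod_mul_prod {G H : Type*} [Group G] [Group H]
    (s u : Set G) (t v : Set H) :
    (s ×ˢ t) * (u ×ˢ v) = (s * u) ×ˢ (t * v) := by
  ext ⟨x, y⟩
  simp only [Set.mem_mul, Set.mem_prod, Prod.exists, Prod.mk_mul_mk, Prod.mk.injEq]
  tauto

private lemma zpowers_pair_eq_prod {G H : Type*} [Group G] [Group H] [Finite G] [Finite H]
    (h : Nat.Coprime (Nat.card G) (Nat.card H)) (g : G) (x : H) :
    Subgroup.zpowers ((g, x) : G × H) = (Subgroup.zpowers g).prod (Subgroup.zpowers x) := by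
  open Subgroup in
  have hco : Nat.Coprime (orderOf g) (orderOf x) :=
    Nat.Coprime.coprime_dvd_right (orderOf_dvd_natCard x)
      (Nat.Coprime.coprime_dvd_left (orderOf_dvd_natCard g) h)
  refine le_antisymm (zpowers_le.2 ⟨mem_zpowers g, mem_zpowers x⟩) ?_
  have h1 : ((g, 1) : G × H) ∈ zpowers ((g, x) : G × H) := by
    obtain ⟨n, hn1, hn2⟩ := Nat.chineseRemainder hco 1 0
    refine ⟨(n : ℤ), ?_⟩
    show (g, x) ^ ((n : ℤ)) = _
    rw [zpow_natCast]
    have : (g, x) ^ n = (g ^ n, x ^ n) := rfl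
    rw [this]
    congr 1
    · conv_rhs => rw [← pow_one g]
      exact (pow_eq_pow_iff_modEq).2 hn1
    · exact orderOf_dvd_iff_pow_eq_one.1 ((Nat.modEq_zero_iff_dvd).1 hn2)
  have h2 : ((1, x) : G × H) ∈ zpowers ((g, x) : G × H) := by
    obtain ⟨n, hn1, hn2⟩ := Nat.chineseRemainder hco 0 1
    refine ⟨(n : ℤ), ?_⟩
    show (g, x) ^ ((n : ℤ)) = _
    rw [zpow_natCast]
    have : (g, x) ^ n = (g ^ n, x ^ n) := rfl
    rw [this]
    congr 1
    · exact orderOf_dvd_iff_pow_eq_one.1 ((Nat.modEq_zero_iff_dvd).1 hn1)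
    · conv_rhs => rw [← pow_one x]
      exact (pow_eq_pow_iff_modEq).2 hn2
  rintro ⟨a, b⟩ ⟨⟨m, rfl⟩, ⟨n, rfl⟩⟩
  have : ((g ^ m, x ^ n) : G × H) = (g, 1) ^ m * (1, x) ^ n := by
    simp [Prod.pow_mk, Prod.mk_mul_mk]
  rw [this]
  exact mul_mem (zpow_mem h1 m) (zpow_mem h2 n)

theorem permutizer_prod_of_coprime (G H : Type*) [Group G] [Group H] [Finite G] [Finite H]
    (h : Nat.Coprime (Nat.card G) (Nat.card H)) (A : Subgroup G) (B : Subgroup H) :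
    permutizer (A.prod B) = (permutizer A).prod (permutizer B) := by
  unfold permutizer
  have hset : {p : G × H |
      (Subgroup.zpowers p : Set (G × H)) * ((A.prod B) : Set (G × H)) =
        ((A.prod B) : Set (G × H)) * (Subgroup.zpowers p : Set (G × H))} =
      {g : G | (Subgroup.zpowers g : Set G) * (A : Set G) =
        (A : Set G) * (Subgroup.zpowers g : Set G)} ×ˢ
      {g : H | (Subgroup.zpowers g : Set H) * (B : Set H) =
        (B : Set H) * (Subgroup.zpowers g : Set H)} := by
    ext ⟨g, x⟩
    simp only [Set.mem_setOf_eq, Set.mem_prod]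
    rw [zpowers_pair_eq_prod h g x, Subgroup.coe_prod, Subgroup.coe_prod,
      set_prod_mul_prod, set_prod_mul_prod]
    have hne : ((Subgroup.zpowers g : Set G) * (A : Set G)) ×ˢ
        ((Subgroup.zpowers x : Set H) * (B : Set H)) |>.Nonempty :=
      ⟨(1, 1), ⟨by simpa using Set.mul_mem_mul (Subgroup.one_mem _) (Subgroup.one_mem A),
        by simpa using Set.mul_mem_mul (Subgroup.one_mem _) (Subgroup.one_mem B)⟩⟩
    rw [Set.prod_eq_prod_iff_of_nonempty hne]
  rw [hset]
  apply Subgroup.closure_prod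
  · show (Subgroup.zpowers (1 : G) : Set G) * (A : Set G) =
      (A : Set G) * (Subgroup.zpowers (1 : G) : Set G)
    rw [Subgroup.zpowers_one_eq_bot, Subgroup.coe_bot, Set.singleton_mul, Set.mul_singleton]
    simp
  · show (Subgroup.zpowers (1 : H) : Set H) * (B : Set H) =
      (B : Set H) * (Subgroup.zpowers (1 : H) : Set H)
    rw [Subgroup.zpowers_one_eq_bot, Subgroup.coe_bot, Set.singleton_mul, Set.mul_singleton]
    simp
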